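/- arXiv:1306.2871 — 2 statements merged into one kernel-verified Lean document; each statement's English description precedes it below -/
import Mathlib

section
/- Let n ≥ 1 and let x ∈ [-1,1]^{n+1} be a boundary point of the cube, i.e. max_{0 ≤ j ≤ n} |x_j| = 1. Then Σ_{k ∈ ℕ^{n+1}} a(x,k)^2 = 1 (the family being summable); that is, the polydisk function φ_x with Taylor coefficients a(x,k) has H^2 norm exactly 1. -/
/-!
For `|x| < 1` the generating function `∑_q f^{(p,q)}(x) z^q` is the Blaschke product
`((x + z) / (1 + x z))^p`: expand `(x + (1 - x²) w)^p` with `w = z / (1 + x z)` binomially and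
`w^j` as a negative binomial series. The product has modulus one on the unit circle and an
absolutely convergent Taylor series there, so Parseval gives `∑_q f^{(p,q)}(x)² = 1`. For `|x| = 1`
the factor `(1 - x²)^j` kills every term but `f^{(p,0)}(x) = x^p`, so the sum is again `1`.

The sum of `a(x,k)²` is the iterated sum
`∑_{k₁} f^{(1,k₁)}(x₀)² ∑_{k₂} f^{(k₁,k₂)}(x₁)² ⋯ ∑_{kₙ} f^{(kₙ₋₁,kₙ)}(xₙ₋₁)² xₙ^{2kₙ}`.
If `|x_j| = 1`, everything from the `j`-th sum on equals `1`: for `j = n` because `xₙ^{2kₙ} = 1`,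
and for `j < n` because `f^{(p,q)}(x_j) = [q = 0] x_j^p` forces `k_{j+1} = 0`, after which
`f^{(0,q)} = [q = 0]` forces all later indices to vanish. Every sum before it is `1` by the
one-variable identity.
-/

/-- Amplitude factor `f^{(p,q)}`. -/
noncomputable def ampF (p q : ℤ) (x : ℝ) : ℝ :=
  if p < 0 ∨ q < 0 then 0
  else if q = 0 then x ^ p.toNat
  else if p = 0 then 0
  else ∑ j ∈ Finset.Icc 1 (min p q).toNat,
    (-1 : ℝ) ^ (q.toNat - j) * (p.toNat.choose j : ℝ) * ((q.toNat - 1).choose (j - 1) : ℝ) *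
      x ^ (p.toNat + q.toNat - 2 * j) * (1 - x ^ 2) ^ j

/-- Amplitude polynomial `a(x,k)`. -/
noncomputable def ampA (n : ℕ) (x : Fin (n+1) → ℝ) (k : Fin (n+1) → ℕ) : ℝ :=
  (if k 0 = 1 then (1:ℝ) else 0) * x (Fin.last n) ^ k (Fin.last n) *
    ∏ j : Fin n, ampF (k j.castSucc) (k j.succ) (x j.castSucc)

open Finset Filter Topology
open scoped ENNReal

theorem one_add_ne_zero_of_norm_lt_one {R : Type*} [NormedRing R] [NormOneClass R] {a : R}
    (h : ‖a‖ < 1) : 1 + a ≠ 0 := by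
  intro h0
  rw [eq_neg_of_add_eq_zero_right h0, norm_neg, norm_one] at h
  exact lt_irrefl _ h

theorem summable_abs_of_summable_mul_pow {a : ℕ → ℝ} {r : ℝ} (hr : 1 < r)
    (h : Summable fun n ↦ a n * r ^ n) : Summable fun n ↦ |a n| := by
  have hr0 : 0 < r := one_pos.trans hr
  refine .of_norm_bounded_eventually_nat
    (summable_geometric_of_lt_one (inv_nonneg.2 hr0.le) (inv_lt_one_of_one_lt₀ hr)) ?_
  have hlim : Tendsto (fun n ↦ |a n * r ^ n|) atTop (𝓝 0) := by
    simpa using h.tendsto_atTop_zero.abs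
  filter_upwards [hlim.eventually_le_const one_pos] with n hn
  have hrn : 0 < r ^ n := pow_pos hr0 n
  calc ‖|a n|‖ = |a n * r ^ n| / r ^ n := by
        rw [norm_abs_eq_norm, Real.norm_eq_abs, abs_mul, abs_of_pos hrn,
          mul_div_cancel_right₀ _ hrn.ne']
    _ ≤ 1 / r ^ n := by gcongr
    _ = r⁻¹ ^ n := by rw [one_div, inv_pow]

theorem hasSum_of_tsum_ofReal_eq {ι : Type*} {f : ι → ℝ} (hf : ∀ i, 0 ≤ f i) {a : ℝ} (ha : 0 ≤ a)
    (h : ∑' i, ENNReal.ofReal (f i) = ENNReal.ofReal a) : HasSum f a := by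
  have := ENNReal.hasSum_toReal (h ▸ ENNReal.ofReal_ne_top)
  rwa [← ENNReal.tsum_toReal_eq fun _ ↦ ENNReal.ofReal_ne_top, h, ENNReal.toReal_ofReal ha,
    funext fun i ↦ ENNReal.toReal_ofReal (hf i)] at this

theorem ENNReal.tsum_fin_cons {α : Type*} {m : ℕ} (f : (Fin (m + 1) → α) → ℝ≥0∞) :
    ∑' k, f k = ∑' (a) (k : Fin m → α), f (Fin.cons a k) := by
  rw [← (Fin.consEquiv fun _ ↦ α).tsum_eq, ENNReal.tsum_prod']
  rfl

theorem HilbertBasis.repr_apply_eq_of_hasSum {ι 𝕜 E : Type*} [RCLike 𝕜] [NormedAddCommGroup E]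
    [InnerProductSpace 𝕜 E] (b : HilbertBasis ι 𝕜 E) {c : ι → 𝕜} {v : E}
    (h : HasSum (fun i ↦ c i • b i) v) (i : ι) : b.repr v i = c i := by
  classical
  have h' := h.mapL (innerSL 𝕜 (b i))
  simp only [innerSL_apply_apply, inner_smul_right, orthonormal_iff_ite.1 b.orthonormal, mul_ite,
    mul_one, mul_zero] at h'
  rw [b.repr_apply_apply]
  simpa using h'.unique (hasSum_single i fun j hj ↦ if_neg (Ne.symm hj))

theorem norm_fourier_apply {T : ℝ} (n : ℤ) (θ : AddCircle T) : ‖fourier n θ‖ = 1 :=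
  Circle.norm_coe _

theorem fourier_one_pow {T : ℝ} (θ : AddCircle T) (q : ℕ) : fourier 1 θ ^ q = fourier q θ := by
  induction q with
  | zero => simp
  | succ q ih => rw [pow_succ, ih, ← fourier_add]; push_cast; rfl

open MeasureTheory AddCircle in
theorem hasSum_sq_norm_of_norm_tsum_fourier_eq_one {T : ℝ} [Fact (0 < T)] {c : ℤ → ℂ}
    (hc : Summable fun n ↦ ‖c n‖) (h : ∀ θ : AddCircle T, ‖∑' n, c n * fourier n θ‖ = 1) :
    HasSum (fun n ↦ ‖c n‖ ^ 2) 1 := by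
  have hS : Summable fun n ↦ c n • fourier (T := T) n :=
    .of_norm (by simpa [norm_smul, fourier_norm] using hc)
  set F := ∑' n, c n • fourier (T := T) n
  set f := ContinuousMap.toLp 2 haarAddCircle ℂ F
  have hF : ∀ θ, F θ = ∑' n, c n * fourier n θ := fun θ ↦ (ContinuousMap.tsum_apply hS θ).symm
  have hcoeff : ∀ n, fourierCoeff f n = c n := by
    intro n
    rw [← fourierBasis_repr]
    refine fourierBasis.repr_apply_eq_of_hasSum ?_ n
    simpa [coe_fourierBasis] using hS.hasSum.mapL (ContinuousMap.toLp 2 haarAddCircle ℂ)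
  have hnorm : ∫ θ, ‖f θ‖ ^ 2 ∂haarAddCircle = 1 := by
    rw [integral_congr_ae (g := fun _ ↦ 1), integral_const, probReal_univ, one_smul]
    filter_upwards [ContinuousMap.coeFn_toLp (p := 2) (𝕜 := ℂ) haarAddCircle F] with θ hθ
    rw [hθ, hF, h, one_pow]
  simpa [hcoeff, hnorm] using hasSum_sq_fourierCoeff f

theorem norm_add_div_one_add_mul_eq_one {x : ℝ} (hx : |x| < 1) {z : ℂ} (hz : ‖z‖ = 1) :
    ‖(x + z) / (1 + x * z)‖ = 1 := by
  have hden : 1 + (x : ℂ) * z ≠ 0 :=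
    one_add_ne_zero_of_norm_lt_one (by rwa [norm_mul, hz, mul_one, Complex.norm_real])
  have hzz : z * (starRingEnd ℂ) z = 1 := by simp [Complex.mul_conj', hz]
  have hnum : (x : ℂ) + z = z * (starRingEnd ℂ) (1 + x * z) := by
    simp only [map_add, map_one, map_mul, Complex.conj_ofReal]
    linear_combination -(x : ℂ) * hzz
  rw [norm_div, hnum, norm_mul, hz, one_mul, Complex.norm_conj, div_self (norm_ne_zero_iff.2 hden)]

/-- The `q`-th Taylor coefficient of `(z / (1 + x * z)) ^ (i + 1)`. -/
def geomCoeff {R : Type*} [Ring R] (x : R) (i q : ℕ) : R :=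
  if i < q then ((q - 1).choose i : R) * (-x) ^ (q - 1 - i) else 0

theorem hasSum_geomCoeff_mul_pow {𝕜 : Type*} [RCLike 𝕜] {x z : 𝕜}
    (h : ‖x * z‖ < 1) (i : ℕ) :
    HasSum (fun q ↦ geomCoeff x i q * z ^ q) ((z / (1 + x * z)) ^ (i + 1)) := by
  have hxz : ‖-(x * z)‖ < 1 := by rwa [norm_neg]
  rw [← hasSum_nat_add_iff' (i + 1)]
  have hlow : ∑ q ∈ range (i + 1), geomCoeff x i q * z ^ q = 0 :=
    sum_eq_zero fun q hq ↦ by simp [geomCoeff, (by simpa [Nat.lt_succ_iff] using hq : ¬ i < q)]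
  rw [hlow, sub_zero]
  have hterm : (fun m ↦ geomCoeff x i (m + (i + 1)) * z ^ (m + (i + 1))) =
      fun m ↦ z ^ (i + 1) * ((m + i).choose i * (-(x * z)) ^ m) := by
    funext m
    simp only [geomCoeff, show i < m + (i + 1) by omega, if_true,
      show m + (i + 1) - 1 = m + i by omega, show m + i - i = m by omega]
    rw [neg_mul_eq_neg_mul, mul_pow, pow_add]
    ring
  have hsum : (z / (1 + x * z)) ^ (i + 1) = z ^ (i + 1) * (1 / (1 - -(x * z)) ^ (i + 1)) := by
    rw [sub_neg_eq_add, div_pow, one_div, div_eq_mul_inv]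
  rw [hterm, hsum]
  exact (hasSum_choose_mul_geometric_of_norm_lt_one i hxz).mul_left _

@[norm_cast]
theorem ofReal_geomCoeff {𝕜 : Type*} [RCLike 𝕜] (x : ℝ) (i q : ℕ) :
    ((geomCoeff x i q : ℝ) : 𝕜) = geomCoeff (x : 𝕜) i q := by
  unfold geomCoeff
  split_ifs <;> push_cast <;> rfl

theorem ampF_natCast_eq (p q : ℕ) (x : ℝ) :
    ampF p q x = (if q = 0 then x ^ p else 0) +
      ∑ i ∈ range p, (p.choose (i + 1) : ℝ) * x ^ (p - (i + 1)) * (1 - x ^ 2) ^ (i + 1) *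
        geomCoeff x i q := by
  rcases Nat.eq_zero_or_pos q with rfl | hq
  · simp [ampF, geomCoeff]
  rcases Nat.eq_zero_or_pos p with rfl | hp
  · simp [ampF, hq.ne']
  have hmin : (min (p : ℤ) q).toNat = min p q := by rw [← Nat.cast_min, Int.toNat_natCast]
  have hvanish : ∀ i ∈ range p, i ∉ range (min p q) →
      (p.choose (i + 1) : ℝ) * x ^ (p - (i + 1)) * (1 - x ^ 2) ^ (i + 1) * geomCoeff x i q = 0 := by
    intro i hip hi
    simp only [mem_range, lt_min_iff, not_and_or, not_lt] at hip hi
    have : ¬ i < q := by omega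
    simp [geomCoeff, this]
  have hnonneg : ¬ ((p : ℤ) < 0 ∨ (q : ℤ) < 0) := by omega
  simp only [ampF, if_neg hnonneg, hmin, Int.toNat_natCast, Nat.cast_eq_zero, hq.ne', hp.ne',
    if_false, zero_add]
  rw [← sum_subset (range_subset_range.2 (min_le_left p q)) hvanish, ← Ico_add_one_right_eq_Icc,
    sum_Ico_eq_sum_range, Nat.add_sub_cancel]
  refine sum_congr rfl fun i hi ↦ ?_
  simp only [mem_range, lt_min_iff] at hi
  rw [geomCoeff, if_pos hi.2, neg_pow, Nat.add_sub_cancel_left, add_comm 1 i,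
    show p + q - 2 * (i + 1) = (p - (i + 1)) + (q - 1 - i) by omega,
    show q - (i + 1) = q - 1 - i by omega, pow_add]
  ring

theorem ampF_eq_zero_of_notMem_range (p : ℤ) {q : ℤ} (hq : q ∉ Set.range ((↑) : ℕ → ℤ))
    (x : ℝ) : ampF p q x = 0 := by
  have : q < 0 := by
    by_contra! h
    exact hq ⟨q.toNat, Int.toNat_of_nonneg h⟩
  simp [ampF, this]

theorem ampF_zero_left (q : ℕ) (x : ℝ) : ampF (0 : ℕ) q x = if q = 0 then 1 else 0 := by
  rw [ampF_natCast_eq]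
  simp

theorem ampF_of_sq_eq_one (p q : ℕ) {x : ℝ} (hx : x ^ 2 = 1) :
    ampF p q x = if q = 0 then x ^ p else 0 := by
  simp [ampF_natCast_eq, hx]

theorem hasSum_ampF_mul_pow {𝕜 : Type*} [RCLike 𝕜] (p : ℕ) {x : ℝ} {z : 𝕜}
    (h : ‖(x : 𝕜) * z‖ < 1) :
    HasSum (fun q : ℕ ↦ (ampF p q x : 𝕜) * z ^ q) (((x + z) / (1 + x * z)) ^ p) := by
  have hden := one_add_ne_zero_of_norm_lt_one h
  have hsplit : ((x : 𝕜) + z) / (1 + x * z) = (1 - (x : 𝕜) ^ 2) * (z / (1 + x * z)) + x := by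
    field_simp
    ring
  have hterm : (fun q : ℕ ↦ (ampF p q x : 𝕜) * z ^ q) = fun q ↦
      (if q = 0 then (x : 𝕜) ^ p else 0) + ∑ i ∈ range p,
        (p.choose (i + 1) : 𝕜) * x ^ (p - (i + 1)) * (1 - x ^ 2) ^ (i + 1) *
          (geomCoeff (x : 𝕜) i q * z ^ q) := by
    funext q
    rw [ampF_natCast_eq]
    push_cast
    rw [add_mul, sum_mul]
    congr 1
    · split_ifs with hq <;> simp [hq]
    · exact sum_congr rfl fun i _ ↦ by ring
  have hval : (((x : 𝕜) + z) / (1 + x * z)) ^ p = (x : 𝕜) ^ p + ∑ i ∈ range p,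
      (p.choose (i + 1) : 𝕜) * x ^ (p - (i + 1)) * (1 - x ^ 2) ^ (i + 1) *
        (z / (1 + x * z)) ^ (i + 1) := by
    rw [hsplit, add_pow, sum_range_succ', add_comm]
    simp only [pow_zero, one_mul, Nat.sub_zero, Nat.choose_zero_right, Nat.cast_one, mul_one,
      mul_pow]
    congr 1
    refine sum_congr rfl fun i _ ↦ ?_
    ring
  rw [hterm, hval]
  exact (hasSum_ite_eq 0 _).add
    (hasSum_sum fun i _ ↦ (hasSum_geomCoeff_mul_pow h i).mul_left _)

theorem summable_abs_ampF (p : ℕ) {x : ℝ} (hx : |x| < 1) : Summable fun q : ℕ ↦ |ampF p q x| := by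
  have hr : 1 < 2 / (1 + |x|) := by rw [one_lt_div (by positivity)]; linarith
  have hxr : ‖x * (2 / (1 + |x|))‖ < 1 := by
    rw [norm_mul, Real.norm_eq_abs, Real.norm_of_nonneg (by positivity), ← mul_div_assoc,
      div_lt_one (by positivity)]
    linarith
  exact summable_abs_of_summable_mul_pow hr
    (by simpa using (hasSum_ampF_mul_pow (𝕜 := ℝ) p hxr).summable)

theorem hasSum_sq_ampF_of_abs_lt_one (p : ℕ) {x : ℝ} (hx : |x| < 1) :
    HasSum (fun q : ℕ ↦ ampF p q x ^ 2) 1 := by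
  have hzero : ∀ n ∉ Set.range ((↑) : ℕ → ℤ), (ampF p n x : ℂ) = 0 := fun n hn ↦ by
    simp [ampF_eq_zero_of_notMem_range p hn]
  have hc : Summable fun n : ℤ ↦ ‖(ampF p n x : ℂ)‖ := by
    rw [← Nat.cast_injective.summable_iff fun n hn ↦ by simp [hzero n hn]]
    simpa [Function.comp_def] using summable_abs_ampF p hx
  have hseries : ∀ θ : AddCircle (1 : ℝ), HasSum (fun n : ℤ ↦ (ampF p n x : ℂ) * fourier n θ)
      (((x + fourier 1 θ) / (1 + x * fourier 1 θ)) ^ p) := by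
    intro θ
    have hxz : ‖(x : ℂ) * fourier 1 θ‖ < 1 := by
      rwa [norm_mul, norm_fourier_apply, mul_one, Complex.norm_real]
    rw [← Nat.cast_injective.hasSum_iff fun n hn ↦ by simp [hzero n hn]]
    have h := hasSum_ampF_mul_pow p hxz
    simp only [fourier_one_pow] at h
    exact h
  have h := hasSum_sq_norm_of_norm_tsum_fourier_eq_one hc fun θ ↦ by
    rw [(hseries θ).tsum_eq, norm_pow,
      norm_add_div_one_add_mul_eq_one hx (norm_fourier_apply 1 θ), one_pow]
  rw [← Nat.cast_injective.hasSum_iff fun n hn ↦ by simp [hzero n hn]] at h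
  simpa [Function.comp_def] using h

theorem hasSum_sq_ampF (p : ℕ) {x : ℝ} (hx : |x| ≤ 1) : HasSum (fun q : ℕ ↦ ampF p q x ^ 2) 1 := by
  rcases hx.lt_or_eq with hx | hx
  · exact hasSum_sq_ampF_of_abs_lt_one p hx
  have hx2 : x ^ 2 = 1 := by rw [← sq_abs, hx, one_pow]
  have hsq : (fun q : ℕ ↦ ampF p q x ^ 2) = fun q ↦ if q = 0 then 1 else 0 := by
    funext q
    rw [ampF_of_sq_eq_one p q hx2]
    split_ifs
    · rw [pow_right_comm, hx2, one_pow]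
    · exact zero_pow two_ne_zero
  rw [hsq]
  exact hasSum_ite_eq 0 1

theorem tsum_ofReal_sq_ampF (p : ℕ) {x : ℝ} (hx : |x| ≤ 1) :
    ∑' q : ℕ, ENNReal.ofReal (ampF p q x ^ 2) = 1 := by
  rw [← ENNReal.ofReal_tsum_of_nonneg (fun _ ↦ sq_nonneg _) (hasSum_sq_ampF p hx).summable,
    (hasSum_sq_ampF p hx).tsum_eq, ENNReal.ofReal_one]

noncomputable def ampChain (m : ℕ) (y : Fin (m + 1) → ℝ) (k : Fin (m + 1) → ℕ) : ℝ :=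
  y (Fin.last m) ^ k (Fin.last m) * ∏ j : Fin m, ampF (k j.castSucc) (k j.succ) (y j.castSucc)

theorem ampA_eq_ite_mul_ampChain (n : ℕ) (x : Fin (n + 1) → ℝ) (k : Fin (n + 1) → ℕ) :
    ampA n x k = (if k 0 = 1 then 1 else 0) * ampChain n x k :=
  mul_assoc _ _ _

theorem ampChain_cons (m : ℕ) (y : Fin (m + 2) → ℝ) (p : ℕ) (k : Fin (m + 1) → ℕ) :
    ampChain (m + 1) y (Fin.cons p k) = ampF p (k 0) (y 0) * ampChain m (Fin.tail y) k := by
  simp only [ampChain, Fin.prod_univ_succ, ← Fin.succ_last, ← Fin.succ_castSucc, Fin.cons_succ,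
    Fin.castSucc_zero, Fin.cons_zero, Fin.tail]
  ring

noncomputable def chainMass (m : ℕ) (y : Fin (m + 1) → ℝ) (p : ℕ) : ℝ≥0∞ :=
  ∑' k : Fin m → ℕ, ENNReal.ofReal (ampChain m y (Fin.cons p k) ^ 2)

theorem chainMass_zero (y : Fin 1 → ℝ) (p : ℕ) :
    chainMass 0 y p = ENNReal.ofReal ((y 0 ^ p) ^ 2) := by
  simp [chainMass, ampChain]

theorem chainMass_succ (m : ℕ) (y : Fin (m + 2) → ℝ) (p : ℕ) :
    chainMass (m + 1) y p =
      ∑' q : ℕ, ENNReal.ofReal (ampF p q (y 0) ^ 2) * chainMass m (Fin.tail y) q := by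
  rw [chainMass, ENNReal.tsum_fin_cons]
  refine tsum_congr fun q ↦ ?_
  rw [chainMass, ← ENNReal.tsum_mul_left]
  refine tsum_congr fun k ↦ ?_
  rw [ampChain_cons, Fin.cons_zero, mul_pow, ENNReal.ofReal_mul (sq_nonneg _)]

theorem chainMass_zero_left (m : ℕ) (y : Fin (m + 1) → ℝ) : chainMass m y 0 = 1 := by
  induction m with
  | zero => simp [chainMass_zero]
  | succ m ih =>
    rw [chainMass_succ, tsum_eq_single 0 fun q hq ↦ by rw [ampF_zero_left, if_neg hq]; simp]
    rw [ampF_zero_left, if_pos rfl, one_pow, ENNReal.ofReal_one, one_mul, ih]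

theorem chainMass_eq_one {m : ℕ} {y : Fin (m + 1) → ℝ} (hy : ∀ i, |y i| ≤ 1)
    (hb : ∃ i, |y i| = 1) (p : ℕ) : chainMass m y p = 1 := by
  induction m generalizing p with
  | zero =>
    obtain ⟨i, hi⟩ := hb
    rw [Fin.fin_one_eq_zero i] at hi
    rw [chainMass_zero, pow_right_comm, ← sq_abs, hi, one_pow, one_pow, ENNReal.ofReal_one]
  | succ m ih =>
    rw [chainMass_succ]
    by_cases h0 : |y 0| = 1
    · have hy2 : y 0 ^ 2 = 1 := by rw [← sq_abs, h0, one_pow]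
      rw [tsum_eq_single 0 fun q hq ↦ by simp [ampF_of_sq_eq_one _ _ hy2, hq],
        ampF_of_sq_eq_one _ _ hy2, if_pos rfl, chainMass_zero_left, pow_right_comm, hy2, one_pow,
        ENNReal.ofReal_one, one_mul]
    · have hb' : ∃ i, |Fin.tail y i| = 1 := by
        obtain ⟨i, hi⟩ := hb
        cases i using Fin.cases with
        | zero => exact absurd hi h0
        | succ i => exact ⟨i, hi⟩
      simp only [ih (y := Fin.tail y) (fun i ↦ hy i.succ) hb', mul_one]
      exact tsum_ofReal_sq_ampF p (hy 0)

theorem boundary_point_inner_general (n : ℕ)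
    (x : Fin (n+1) → ℝ) (hx : ∀ j, x j ∈ Set.Icc (-1 : ℝ) 1)
    (hb : ∃ j, |x j| = 1) :
    HasSum (fun k : Fin (n+1) → ℕ => ampA n x k ^ 2) 1 := by
  have hmass : ∑' k, ENNReal.ofReal (ampA n x k ^ 2) = ENNReal.ofReal 1 := by
    rw [ENNReal.tsum_fin_cons, tsum_eq_single 1 fun q hq ↦ by simp [ampA_eq_ite_mul_ampChain, hq],
      ENNReal.ofReal_one, ← chainMass_eq_one (fun j ↦ abs_le.2 (hx j)) hb 1]
    simp [ampA_eq_ite_mul_ampChain, chainMass]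
  exact hasSum_of_tsum_ofReal_eq (fun _ ↦ sq_nonneg _) zero_le_one hmass

/-- if `x` is a boundary point of the cube `[-1,1]^{n+1}` (i.e. some
    `|x_j| = 1`), then `Σ_k a(x,k)² = 1`, i.e. `φ_x` is inner. -/
theorem boundary_point_inner (n : ℕ) (hn : 1 ≤ n)
    (x : Fin (n+1) → ℝ) (hx : ∀ j, x j ∈ Set.Icc (-1 : ℝ) 1)
    (hb : ∃ j, |x j| = 1) :
    HasSum (fun k : Fin (n+1) → ℕ => ampA n x k ^ 2) 1 :=
  boundary_point_inner_general n x hx hb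
end

section
/- Fix integers n ≥ 2, 1 ≤ j ≤ n-1, m ≥ 1. Let k^7 ∈ ℕ^{n+1} be given by k^7_i = 1 for 0 ≤ i ≤ j, k^7_{j+1} = 2m, and k^7_i = 0 for i > j+1. Let x ∈ [-1,1]^{n+1} and write ã_7 = a(x, k^7). If ã_7 ≠ 0, then x_j and ã_7 have opposite signs: x_j · ã_7 < 0 (equivalently, x_j/|x_j| = -ã_7/|ã_7|). -/
/-!
The amplitude at `k⁷` is a product of factors `f^{(1,1)}(x_i) = 1 - x_i²` for `i < j`,
even powers of `x_i` for `i > j` (and `x_n^{k_n}`, again an even power), all nonnegative on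
`[-1, 1]`, and the single factor `f^{(1,2m)}(x_j) = -x_j^{2m-1} (1 - x_j²)`. Hence
`x_j · a ≤ 0`; and `x_j ≠ 0`, since otherwise that factor and with it `a` would vanish.
-/

open Finset

section AmplitudeFactor

lemma ampF_natCast_zero (p : ℕ) (x : ℝ) : ampF p 0 x = x ^ p := by
  simp [ampF]

lemma ampF_one_natCast {q : ℕ} (hq : q ≠ 0) (x : ℝ) :
    ampF 1 q x = (-1) ^ (q - 1) * x ^ (q - 1) * (1 - x ^ 2) := by
  have hmin : (min (1 : ℤ) q).toNat = 1 := by omega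
  have hexp : 1 + q - 2 * 1 = q - 1 := by omega
  simp [ampF, hq, hmin, hexp]

lemma ampF_one_one (x : ℝ) : ampF 1 1 x = 1 - x ^ 2 := by
  simpa using ampF_one_natCast one_ne_zero x

lemma ampF_one_natCast_zero {q : ℕ} (hq : 2 ≤ q) : ampF 1 q 0 = 0 := by
  rw [ampF_one_natCast (by omega), zero_pow (by omega)]
  ring

lemma mul_ampF_one_two_mul_nonpos {m : ℕ} (hm : m ≠ 0) {x : ℝ} (hx : x ^ 2 ≤ 1) :
    x * ampF 1 (2 * m : ℕ) x ≤ 0 := by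
  have hodd : Odd (2 * m - 1) := ⟨m - 1, by omega⟩
  have hpow : x * x ^ (2 * m - 1) = (x ^ 2) ^ m := by
    rw [← pow_succ', ← pow_mul]
    congr 1
    omega
  rw [ampF_one_natCast (by omega), hodd.neg_one_pow,
    show ∀ a b : ℝ, x * (-1 * a * b) = -(x * a * b) by intros; ring, hpow, neg_nonpos]
  exact mul_nonneg (by positivity) (by linarith)

end AmplitudeFactor

section AmplitudePolynomial

variable {n : ℕ} {x : Fin (n + 1) → ℝ} {k : Fin (n + 1) → ℕ}

lemma ampA_eq_zero_of_ampF_eq_zero (i : Fin n)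
    (h : ampF (k i.castSucc) (k i.succ) (x i.castSucc) = 0) : ampA n x k = 0 := by
  rw [ampA, prod_eq_zero (mem_univ i) h, mul_zero]

lemma mul_ampA_nonpos (i₀ : Fin n) {y : ℝ} (hlast : 0 ≤ x (Fin.last n) ^ k (Fin.last n))
    (hfac : ∀ i ≠ i₀, 0 ≤ ampF (k i.castSucc) (k i.succ) (x i.castSucc))
    (h₀ : y * ampF (k i₀.castSucc) (k i₀.succ) (x i₀.castSucc) ≤ 0) :
    y * ampA n x k ≤ 0 := by
  have hind : (0 : ℝ) ≤ if k 0 = 1 then 1 else 0 := by split_ifs <;> norm_num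
  have hrest : 0 ≤ ∏ i ∈ univ.erase i₀, ampF (k i.castSucc) (k i.succ) (x i.castSucc) :=
    prod_nonneg fun i hi => hfac i (ne_of_mem_erase hi)
  rw [ampA, ← mul_prod_erase _ _ (mem_univ i₀)]
  have := mul_nonpos_of_nonneg_of_nonpos (mul_nonneg (mul_nonneg hind hlast) hrest) h₀
  linear_combination this

end AmplitudePolynomial

section StepPoint

/-- The lattice point `k⁷ = 𝟙^j + 2m·e^{j+1}` of the paper, indexed by `ℕ`. -/
def stepPoint (j m i : ℕ) : ℕ :=
  if i ≤ j then 1 else if i = j + 1 then 2 * m else 0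

variable {j m i : ℕ}

lemma stepPoint_of_le (h : i ≤ j) : stepPoint j m i = 1 := by
  simp [stepPoint, h]

lemma stepPoint_succ_self : stepPoint j m (j + 1) = 2 * m := by
  simp [stepPoint]

lemma stepPoint_of_succ_lt (h : j + 1 < i) : stepPoint j m i = 0 := by
  simp [stepPoint, show ¬i ≤ j by omega, show i ≠ j + 1 by omega]

lemma even_stepPoint (h : j < i) : Even (stepPoint j m i) := by
  unfold stepPoint
  split_ifs
  exacts [absurd h (by omega), even_two_mul m, Even.zero]

lemma ampF_stepPoint_nonneg (hi : i ≠ j) {x : ℝ} (hx : x ^ 2 ≤ 1) :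
    0 ≤ ampF (stepPoint j m i) (stepPoint j m (i + 1)) x := by
  rcases lt_or_gt_of_ne hi with hlt | hgt
  · rw [stepPoint_of_le hlt.le, stepPoint_of_le hlt, Nat.cast_one, ampF_one_one]
    linarith
  · rw [stepPoint_of_succ_lt (i := i + 1) (by omega), Nat.cast_zero, ampF_natCast_zero]
    exact (even_stepPoint hgt).pow_nonneg x

end StepPoint

/-- the sign of `x_j` from the amplitude at the lattice point
    `k⁷ = 𝟙^j + 2m·e^{j+1}`. -/
theorem sign_lemma (n j m : ℕ) (hj1 : 1 ≤ j) (hj2 : j ≤ n - 1) (hm : 1 ≤ m)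
    (k7 : Fin (n+1) → ℕ)
    (hk7 : ∀ i : Fin (n+1), k7 i =
      if (i : ℕ) ≤ j then 1 else if (i : ℕ) = j + 1 then 2 * m else 0)
    (x : Fin (n+1) → ℝ) (hx : ∀ i, x i ∈ Set.Icc (-1 : ℝ) 1)
    (ha : ampA n x k7 ≠ 0) :
    x ⟨j, by omega⟩ * ampA n x k7 < 0 := by
  obtain rfl : k7 = fun i : Fin (n + 1) => stepPoint j m i := funext hk7
  have hsq (i : Fin (n + 1)) : x i ^ 2 ≤ 1 := sq_le_one_iff_abs_le_one _ |>.2 (abs_le.2 (hx i))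
  let i₀ : Fin n := ⟨j, by omega⟩
  have hfac₀ : ampF (stepPoint j m i₀.castSucc) (stepPoint j m i₀.succ) (x i₀.castSucc) =
      ampF 1 (2 * m : ℕ) (x ⟨j, by omega⟩) := by
    simp only [Fin.val_castSucc, Fin.val_succ, i₀, stepPoint_of_le le_rfl, stepPoint_succ_self]
    rfl
  have hxj : x ⟨j, by omega⟩ ≠ 0 := fun h0 =>
    ha (ampA_eq_zero_of_ampF_eq_zero i₀ (by rw [hfac₀, h0, ampF_one_natCast_zero (by omega)]))
  refine lt_of_le_of_ne ?_ (mul_ne_zero hxj ha)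
  refine mul_ampA_nonpos i₀ ?_ (fun i hi => ?_) ?_
  · exact (even_stepPoint (by rw [Fin.val_last]; omega)).pow_nonneg _
  · simpa using ampF_stepPoint_nonneg (m := m) (fun h => hi (Fin.ext h)) (hsq i.castSucc)
  · exact hfac₀ ▸ mul_ampF_one_two_mul_nonpos (by omega) (hsq _)
end
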